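/- arXiv:1709.06069 — 2 statements merged into one kernel-verified Lean document; each statement's English description precedes it below -/
import Mathlib

section
/- If G is a graph of order n with a vertex u of degree n−2, then γtg(G) ≤ 3. -/
open scoped Classical

/-- The value of the total domination game on `G` with the set `D` of vertices
already totally dominated; `dTurn = true` means Dominator (minimizer) to move,
`dTurn = false` means Staller (maximizer) to move. Each move must be a vertex
totally dominating at least one vertex not in `D`; the value is the number of
moves played until no legal move remains, under optimal play. -/
noncomputable def tgVal {V : Type*} [Fintype V] (G : SimpleGraph V)
    (dTurn : Bool) (D : Finset V) : ℕ :=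
  if h : (Finset.univ.filter fun v => ∃ u, G.Adj v u ∧ u ∉ D).Nonempty then
    1 + (if dTurn then
          ((Finset.univ.filter fun v => ∃ u, G.Adj v u ∧ u ∉ D).attach).inf'
            (Finset.attach_nonempty_iff.mpr h)
            (fun v => tgVal G false (D ∪ G.neighborFinset v.1))
        else
          ((Finset.univ.filter fun v => ∃ u, G.Adj v u ∧ u ∉ D).attach).sup'
            (Finset.attach_nonempty_iff.mpr h)
            (fun v => tgVal G true (D ∪ G.neighborFinset v.1)))
  else 0
termination_by (Finset.univ \ D).card
decreasing_by
  all_goals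
  · obtain ⟨v, hv⟩ := v
    simp only [Finset.mem_filter, Finset.mem_univ, true_and] at hv
    obtain ⟨u, hadj, hu⟩ := hv
    apply Finset.card_lt_card
    rw [Finset.ssubset_iff_of_subset
      (Finset.sdiff_subset_sdiff (subset_refl _) Finset.subset_union_left)]
    exact ⟨u, by simp [hu], by simp [hadj]⟩

/-- The game total domination number (Dominator starts). -/
noncomputable def gammaTG {V : Type*} [Fintype V] (G : SimpleGraph V) : ℕ :=
  tgVal G true ∅

/-- The Staller-start game total domination number. -/
noncomputable def gammaTG' {V : Type*} [Fintype V] (G : SimpleGraph V) : ℕ :=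
  tgVal G false ∅

/-- The game total domination number of `G|S` (vertices of `S` already totally dominated). -/
noncomputable def gammaTGSub {V : Type*} [Fintype V] (G : SimpleGraph V) (S : Finset V) : ℕ :=
  tgVal G true S

/-- `G` is total domination game critical. -/
def IsTGCritical {V : Type*} [Fintype V] (G : SimpleGraph V) : Prop :=
  ∀ v : V, gammaTGSub G {v} < gammaTG G

/-- `G` is `k`-`γtg`-critical. -/
def IsKTGCritical {V : Type*} [Fintype V] (k : ℕ) (G : SimpleGraph V) : Prop :=
  gammaTG G = k ∧ IsTGCritical G

/-!
Dominator opens with `u`, which totally dominates all but the two vertices outside `N(u)`.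
Every later move totally dominates a new vertex, so at most two more moves follow. If `u` has
no neighbour, then `G` has at most two vertices and the game has at most two moves.
-/

open Finset

section TotalDominationGame

variable {V : Type*} [Fintype V] (G : SimpleGraph V)

lemma card_compl_union_neighborFinset_lt {D : Finset V} {v w : V} (hvw : G.Adj v w)
    (hw : w ∉ D) : #(D ∪ G.neighborFinset v)ᶜ < #Dᶜ :=
  card_lt_card <| compl_ssubset_compl.mpr <|
    Finset.ssubset_iff_subset_ne.mpr ⟨subset_union_left, fun h =>
      hw (h ▸ mem_union_right _ ((G.mem_neighborFinset v w).mpr hvw))⟩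

lemma tgVal_le_card_compl (b : Bool) (D : Finset V) : tgVal G b D ≤ #Dᶜ := by
  induction hn : #Dᶜ using Nat.strong_induction_on generalizing b D with
  | _ n ih =>
  have hstep : ∀ (b : Bool) (v : V), (∃ w, G.Adj v w ∧ w ∉ D) →
      tgVal G b (D ∪ G.neighborFinset v) < n := by
    rintro b v ⟨w, hvw, hw⟩
    have hlt := card_compl_union_neighborFinset_lt G hvw hw
    exact (ih _ (hn ▸ hlt) b _ rfl).trans_lt (hn ▸ hlt)
  rw [tgVal]
  split_ifs with hne
  · obtain ⟨v, hv⟩ := hne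
    rw [add_comm, Nat.add_one_le_iff]
    exact (inf'_le _ (mem_attach _ ⟨v, hv⟩)).trans_lt (hstep false v (by simpa using hv))
  · rw [add_comm, Nat.add_one_le_iff, sup'_lt_iff]
    exact fun ⟨v, hv⟩ _ => hstep true v (by simpa using hv)
  · exact Nat.zero_le _

lemma tgVal_true_le_one_add {D : Finset V} {v w : V} (hvw : G.Adj v w) (hw : w ∉ D) :
    tgVal G true D ≤ 1 + tgVal G false (D ∪ G.neighborFinset v) := by
  have hv : v ∈ univ.filter (fun v => ∃ u, G.Adj v u ∧ u ∉ D) := by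
    simpa using ⟨w, hvw, hw⟩
  rw [tgVal, dif_pos ⟨v, hv⟩, if_pos rfl]
  exact Nat.add_le_add_left (inf'_le _ (mem_attach _ ⟨v, hv⟩)) 1

end TotalDominationGame

theorem stmt16 {V : Type*} [Fintype V] (G : SimpleGraph V) (u : V)
    (hu : G.degree u = Fintype.card V - 2) : gammaTG G ≤ 3 := by
  by_cases hadj : ∃ z, G.Adj u z
  · obtain ⟨z, huz⟩ := hadj
    calc gammaTG G ≤ 1 + tgVal G false (∅ ∪ G.neighborFinset u) :=
          tgVal_true_le_one_add G huz (notMem_empty z)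
      _ ≤ 1 + #(∅ ∪ G.neighborFinset u)ᶜ := by grw [tgVal_le_card_compl]
      _ ≤ 3 := by
          rw [empty_union, card_compl, G.card_neighborFinset_eq_degree, hu]
          omega
  · have hu0 : G.degree u = 0 :=
      Nat.eq_zero_of_not_pos (hadj ∘ (G.degree_pos_iff_exists_adj u).mp)
    calc gammaTG G ≤ #(∅ : Finset V)ᶜ := tgVal_le_card_compl G true ∅
      _ ≤ 3 := by
          rw [compl_empty, card_univ]
          omega
end

section
/- The path P₄ is the unique 3-γtg-critical graph of order at most 4. -/
open scoped Classical

/-! ### Auxiliary machinery -/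

def nbrB {V : Type*} [Fintype V] [DecidableEq V] (f : V → V → Bool) (v : V) : Finset V :=
  Finset.univ.filter (fun u => f v u)

def legalB {V : Type*} [Fintype V] [DecidableEq V] (f : V → V → Bool) (D : Finset V) : Finset V :=
  Finset.univ.filter (fun v => (nbrB f v \ D).Nonempty)

def gval {V : Type*} [Fintype V] [DecidableEq V] (f : V → V → Bool) : ℕ → Bool → Finset V → ℕ
  | 0, _, _ => 0
  | (fuel+1), t, D =>
    if h : (legalB f D).Nonempty then
      1 + (if t then (legalB f D).inf' h (fun v => gval f fuel false (D ∪ nbrB f v))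
           else (legalB f D).sup' h (fun v => gval f fuel true (D ∪ nbrB f v)))
    else 0

lemma inf'_attach' {α β : Type*} [SemilatticeInf β] (s : Finset α) (h : s.attach.Nonempty)
    (F : α → β) :
    s.attach.inf' h (fun x => F x.1) = s.inf' (Finset.attach_nonempty_iff.mp h) F := by
  have hmap : s.attach.map (Function.Embedding.subtype _) = s := Finset.attach_map_val
  rw [Finset.inf'_congr (Finset.attach_nonempty_iff.mp h) (f := F) (g := F) hmap.symm
    (fun _ _ => rfl), Finset.inf'_map]
  rfl

lemma sup'_attach' {α β : Type*} [SemilatticeSup β] (s : Finset α) (h : s.attach.Nonempty)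
    (F : α → β) :
    s.attach.sup' h (fun x => F x.1) = s.sup' (Finset.attach_nonempty_iff.mp h) F := by
  have hmap : s.attach.map (Function.Embedding.subtype _) = s := Finset.attach_map_val
  rw [Finset.sup'_congr (Finset.attach_nonempty_iff.mp h) (f := F) (g := F) hmap.symm
    (fun _ _ => rfl), Finset.sup'_map]
  rfl

lemma mem_legalB_of {V : Type*} [Fintype V] {G : SimpleGraph V}
    {f : V → V → Bool} (hf : ∀ a b, G.Adj a b ↔ f a b = true) {D : Finset V} {v u : V}
    (hadj : G.Adj v u) (hu : u ∉ D) : v ∈ legalB f D := by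
  simp only [legalB, Finset.mem_filter, Finset.mem_univ, true_and]
  exact ⟨u, Finset.mem_sdiff.mpr ⟨by simp [nbrB, (hf v u).mp hadj], hu⟩⟩

lemma legalB_mem_of {V : Type*} [Fintype V] {G : SimpleGraph V}
    {f : V → V → Bool} (hf : ∀ a b, G.Adj a b ↔ f a b = true) {D : Finset V} {v : V}
    (hv : v ∈ legalB f D) : ∃ u, G.Adj v u ∧ u ∉ D := by
  simp only [legalB, Finset.mem_filter, Finset.mem_univ, true_and] at hv
  obtain ⟨u, hu⟩ := hv
  rw [Finset.mem_sdiff] at hu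
  simp only [nbrB, Finset.mem_filter, Finset.mem_univ, true_and] at hu
  exact ⟨u, (hf v u).mpr hu.1, hu.2⟩

lemma tgVal_eq_gval {V : Type*} [Fintype V] (G : SimpleGraph V)
    (f : V → V → Bool) (hf : ∀ a b, G.Adj a b ↔ f a b = true) :
    ∀ (fuel : ℕ) (t : Bool) (D : Finset V), (Finset.univ \ D).card ≤ fuel →
      tgVal G t D = gval f fuel t D := by
  intro fuel
  induction fuel with
  | zero =>
    intro t D hle
    have hD : ∀ u : V, u ∈ D := by
      intro u
      by_contra hu
      have : u ∈ Finset.univ \ D := by simp [hu]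
      have := Finset.card_pos.mpr ⟨u, this⟩
      omega
    rw [tgVal, gval]
    split
    · next h' =>
      obtain ⟨v, hv⟩ := h'
      rw [Finset.mem_filter] at hv
      obtain ⟨-, u, -, hu⟩ := hv
      exact absurd (hD u) hu
    · rfl
  | succ n ih =>
    intro t D hle
    have hcard : ∀ v : V, v ∈ legalB f D →
        (Finset.univ \ (D ∪ nbrB f v)).card ≤ n := by
      intro v hv
      obtain ⟨u, hadj, hu⟩ := legalB_mem_of hf hv
      have hlt : (Finset.univ \ (D ∪ nbrB f v)).card < (Finset.univ \ D).card := by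
        apply Finset.card_lt_card
        rw [Finset.ssubset_iff_of_subset
          (Finset.sdiff_subset_sdiff (subset_refl _) Finset.subset_union_left)]
        exact ⟨u, by simp [hu], by simp [nbrB, (hf v u).mp hadj, hu]⟩
      omega
    have hnbr : ∀ v : V, G.neighborFinset v = nbrB f v := by
      intro v; ext u; simp [nbrB, hf]
    rw [tgVal, gval]
    split
    · next h' =>
      have h : (legalB f D).Nonempty := by
        obtain ⟨v, hv⟩ := h'
        rw [Finset.mem_filter] at hv
        obtain ⟨-, u, hadj, hu⟩ := hv
        exact ⟨v, mem_legalB_of hf hadj hu⟩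
      rw [dif_pos h]
      congr 1
      cases t
      · rw [if_neg (by simp), if_neg (by simp)]
        refine (sup'_attach' _ (Finset.attach_nonempty_iff.mpr h')
          (fun a => tgVal G true (D ∪ G.neighborFinset a))).trans ?_
        refine Finset.sup'_congr _ (by ext v; simp [legalB, nbrB, hf, Finset.Nonempty])
          (fun v hv => ?_)
        rw [Finset.mem_filter] at hv
        obtain ⟨-, u, hadj, hu⟩ := hv
        rw [hnbr, ih true _ (hcard v (mem_legalB_of hf hadj hu))]
      · rw [if_pos rfl, if_pos rfl]
        refine (inf'_attach' _ (Finset.attach_nonempty_iff.mpr h')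
          (fun a => tgVal G false (D ∪ G.neighborFinset a))).trans ?_
        refine Finset.inf'_congr _ (by ext v; simp [legalB, nbrB, hf, Finset.Nonempty])
          (fun v hv => ?_)
        rw [Finset.mem_filter] at hv
        obtain ⟨-, u, hadj, hu⟩ := hv
        rw [hnbr, ih false _ (hcard v (mem_legalB_of hf hadj hu))]
    · next h' =>
      rw [dif_neg]
      rintro ⟨v, hv⟩
      obtain ⟨u, hadj, hu⟩ := legalB_mem_of hf hv
      exact h' ⟨v, Finset.mem_filter.mpr ⟨Finset.mem_univ v, u, hadj, hu⟩⟩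

lemma gval_equiv {V W : Type*} [Fintype V] [DecidableEq V] [Fintype W] [DecidableEq W]
    (e : V ≃ W) (f : V → V → Bool) :
    ∀ (fuel : ℕ) (t : Bool) (D : Finset V),
      gval f fuel t D
        = gval (fun i j => f (e.symm i) (e.symm j)) fuel t (D.map e.toEmbedding) := by
  set g : W → W → Bool := fun i j => f (e.symm i) (e.symm j) with hg
  have hnbr : ∀ v : V, nbrB g (e v) = (nbrB f v).map e.toEmbedding := by
    intro v; ext w
    simp [nbrB, Finset.mem_map_equiv, hg]
  have hunion : ∀ (D : Finset V) (v : V),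
      D.map e.toEmbedding ∪ nbrB g (e v) = (D ∪ nbrB f v).map e.toEmbedding := by
    intro D v; rw [hnbr, Finset.map_union]
  have hlegal : ∀ D : Finset V,
      legalB g (D.map e.toEmbedding) = (legalB f D).map e.toEmbedding := by
    intro D; ext w
    simp only [legalB, Finset.mem_filter, Finset.mem_univ, true_and, Finset.mem_map_equiv]
    constructor
    · rintro ⟨u, hu⟩
      rw [Finset.mem_sdiff] at hu
      refine ⟨e.symm u, Finset.mem_sdiff.mpr ⟨?_, ?_⟩⟩
      · simpa [nbrB, hg] using hu.1
      · intro hmem; exact hu.2 (by simpa [Finset.mem_map_equiv] using hmem)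
    · rintro ⟨u, hu⟩
      rw [Finset.mem_sdiff] at hu
      refine ⟨e u, Finset.mem_sdiff.mpr ⟨?_, ?_⟩⟩
      · simp only [nbrB, Finset.mem_filter, Finset.mem_univ, true_and] at hu ⊢
        simpa [hg] using hu.1
      · intro hmem; exact hu.2 (by simpa [Finset.mem_map_equiv] using hmem)
  intro fuel
  induction fuel with
  | zero => intro t D; rfl
  | succ n ih =>
    intro t D
    rw [gval, gval, hlegal D]
    by_cases h : (legalB f D).Nonempty
    · rw [dif_pos h, dif_pos (Finset.map_nonempty.mpr h)]
      congr 1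
      cases t
      · rw [if_neg (by simp), if_neg (by simp), Finset.sup'_map]
        refine Finset.sup'_congr h rfl (fun v hv => ?_)
        simp only [Function.comp_apply, Equiv.coe_toEmbedding]
        rw [ih, hunion D v]
      · rw [if_pos rfl, if_pos rfl, Finset.inf'_map]
        refine Finset.inf'_congr h rfl (fun v hv => ?_)
        simp only [Function.comp_apply, Equiv.coe_toEmbedding]
        rw [ih, hunion D v]
    · rw [dif_neg h, dif_neg (by simpa [Finset.map_nonempty] using h)]

/-- Packaged reduction of the game on `G` to a game on a boolean matrix over `Fin k`. -/
lemma reduceToFin {V : Type*} [Fintype V] (G : SimpleGraph V) {k : ℕ}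
    (h : Fintype.card V = k) :
    ∃ (e : V ≃ Fin k) (g : Fin k → Fin k → Bool),
      (∀ i j, g i j = g j i) ∧ (∀ i, g i i = false) ∧
      gammaTG G = gval g k true ∅ ∧
      (∀ v : V, gammaTGSub G {v} = gval g k true {e v}) ∧
      (∀ a b : V, G.Adj a b ↔ g (e a) (e b) = true) := by
  classical
  obtain e := Fintype.equivFinOfCardEq h
  set f : V → V → Bool := fun a b => decide (G.Adj a b) with hfdef
  have hf : ∀ a b, G.Adj a b ↔ f a b = true := fun a b => by simp [hfdef]
  refine ⟨e, fun i j => f (e.symm i) (e.symm j), ?_, ?_, ?_, ?_, ?_⟩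
  · intro i j
    exact decide_eq_decide.mpr (G.adj_comm _ _)
  · intro i
    simp [hfdef]
  · have h1 : gammaTG G = gval f k true ∅ :=
      tgVal_eq_gval G f hf k true ∅ (by simp [h])
    rw [gammaTG] at h1
    rw [show gammaTG G = tgVal G true ∅ from rfl, h1,
      gval_equiv e f k true ∅, Finset.map_empty]
  · intro v
    have h1 : tgVal G true {v} = gval f k true {v} :=
      tgVal_eq_gval G f hf k true {v}
        (le_trans (Finset.card_le_card (Finset.sdiff_subset)) (by simp [h]))
    rw [show gammaTGSub G {v} = tgVal G true {v} from rfl, h1,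
      gval_equiv e f k true {v}, Finset.map_singleton]
    rfl
  · intro a b
    simpa using hf a b

/-- Boolean adjacency of the path on four vertices. -/
def pAdjB (i j : Fin 4) : Bool := (i.val + 1 == j.val) || (j.val + 1 == i.val)

lemma pAdjB_iff (i j : Fin 4) : pAdjB i j = true ↔ (SimpleGraph.pathGraph 4).Adj i j := by
  rw [SimpleGraph.pathGraph_adj]
  simp [pAdjB]

def tbl (x0 x1 x2 x3 x4 x5 : Bool) (i j : Fin 4) : Bool :=
  match i.val, j.val with
  | 0,1 => x0 | 1,0 => x0
  | 0,2 => x1 | 2,0 => x1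
  | 0,3 => x2 | 3,0 => x2
  | 1,2 => x3 | 2,1 => x3
  | 1,3 => x4 | 3,1 => x4
  | 2,3 => x5 | 3,2 => x5
  | _,_ => false

def tbl3 (x0 x1 x2 : Bool) (i j : Fin 3) : Bool :=
  match i.val, j.val with
  | 0,1 => x0 | 1,0 => x0
  | 0,2 => x1 | 2,0 => x1
  | 1,2 => x2 | 2,1 => x2
  | _,_ => false

def tbl2 (x0 : Bool) (i j : Fin 2) : Bool :=
  match i.val, j.val with
  | 0,1 => x0 | 1,0 => x0
  | _,_ => false

lemma eqTbl4 {f : Fin 4 → Fin 4 → Bool} (hs : ∀ i j, f i j = f j i)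
    (hi : ∀ i, f i i = false) :
    f = tbl (f 0 1) (f 0 2) (f 0 3) (f 1 2) (f 1 3) (f 2 3) := by
  funext i j
  fin_cases i <;> fin_cases j <;> first | exact hi _ | rfl | exact hs _ _

lemma eqTbl3 {f : Fin 3 → Fin 3 → Bool} (hs : ∀ i j, f i j = f j i)
    (hi : ∀ i, f i i = false) :
    f = tbl3 (f 0 1) (f 0 2) (f 1 2) := by
  funext i j
  fin_cases i <;> fin_cases j <;> first | exact hi _ | rfl | exact hs _ _

lemma eqTbl2 {f : Fin 2 → Fin 2 → Bool} (hs : ∀ i j, f i j = f j i)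
    (hi : ∀ i, f i i = false) : f = tbl2 (f 0 1) := by
  funext i j
  fin_cases i <;> fin_cases j <;> first | exact hi _ | rfl | exact hs _ _

lemma eqTbl1 {f : Fin 1 → Fin 1 → Bool} (hi : ∀ i, f i i = false) :
    f = fun _ _ => false := by
  funext i j
  fin_cases i <;> fin_cases j <;> exact hi _

set_option maxRecDepth 100000 in
lemma key4 : ∀ x0 x1 x2 x3 x4 x5 : Bool,
    ((gval (tbl x0 x1 x2 x3 x4 x5) 4 true ∅ = 3 ∧
        ∀ v, gval (tbl x0 x1 x2 x3 x4 x5) 4 true {v} < 3) ↔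
      ∃ p : Equiv.Perm (Fin 4), ∀ i j, tbl x0 x1 x2 x3 x4 x5 i j = pAdjB (p i) (p j)) := by
  decide

set_option maxRecDepth 100000 in
lemma key3 : ∀ x0 x1 x2 : Bool,
    ¬ (gval (tbl3 x0 x1 x2) 3 true ∅ = 3 ∧
        ∀ v, gval (tbl3 x0 x1 x2) 3 true {v} < 3) := by
  decide

set_option maxRecDepth 100000 in
lemma key2 : ∀ x0 : Bool,
    ¬ (gval (tbl2 x0) 2 true ∅ = 3 ∧ ∀ v, gval (tbl2 x0) 2 true {v} < 3) := by
  decide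

lemma key1 : ¬ (gval (fun _ _ => false : Fin 1 → Fin 1 → Bool) 1 true ∅ = 3 ∧
    ∀ v, gval (fun _ _ => false : Fin 1 → Fin 1 → Bool) 1 true {v} < 3) := by
  decide

theorem stmt18 {V : Type*} [Fintype V] (G : SimpleGraph V)
    (hcard : Fintype.card V ≤ 4) :
    IsKTGCritical 3 G ↔ Nonempty (G ≃g SimpleGraph.pathGraph 4) := by
  rcases (by omega : Fintype.card V = 0 ∨ Fintype.card V = 1 ∨ Fintype.card V = 2 ∨
      Fintype.card V = 3 ∨ Fintype.card V = 4) with h|h|h|h|h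
  · -- card V = 0
    constructor
    · rintro ⟨h3, -⟩
      obtain ⟨e, g, -, -, hval0, -, -⟩ := reduceToFin G h
      rw [hval0] at h3
      exact absurd h3 (by rw [show (gval g 0 true ∅) = 0 from rfl]; omega)
    · rintro ⟨φ⟩
      have h4 : Fintype.card V = 4 := by
        rw [← Fintype.card_fin 4]; exact Fintype.card_congr φ.toEquiv
      omega
  · -- card V = 1
    constructor
    · rintro ⟨h3, hcrit⟩
      obtain ⟨e, g, hs, hi, hval0, hval1, -⟩ := reduceToFin G h
      refine absurd ⟨eqTbl1 hi ▸ (hval0 ▸ h3), fun w => ?_⟩ key1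
      have h2 := hcrit (e.symm w)
      rw [h3, hval1 (e.symm w)] at h2
      rw [← eqTbl1 hi]
      simpa using h2
    · rintro ⟨φ⟩
      have h4 : Fintype.card V = 4 := by
        rw [← Fintype.card_fin 4]; exact Fintype.card_congr φ.toEquiv
      omega
  · -- card V = 2
    constructor
    · rintro ⟨h3, hcrit⟩
      obtain ⟨e, g, hs, hi, hval0, hval1, -⟩ := reduceToFin G h
      refine absurd ⟨eqTbl2 hs hi ▸ (hval0 ▸ h3), fun w => ?_⟩ (key2 _)
      have h2 := hcrit (e.symm w)
      rw [h3, hval1 (e.symm w)] at h2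
      rw [← eqTbl2 hs hi]
      simpa using h2
    · rintro ⟨φ⟩
      have h4 : Fintype.card V = 4 := by
        rw [← Fintype.card_fin 4]; exact Fintype.card_congr φ.toEquiv
      omega
  · -- card V = 3
    constructor
    · rintro ⟨h3, hcrit⟩
      obtain ⟨e, g, hs, hi, hval0, hval1, -⟩ := reduceToFin G h
      refine absurd ⟨eqTbl3 hs hi ▸ (hval0 ▸ h3), fun w => ?_⟩ (key3 _ _ _)
      have h2 := hcrit (e.symm w)
      rw [h3, hval1 (e.symm w)] at h2
      rw [← eqTbl3 hs hi]
      simpa using h2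
    · rintro ⟨φ⟩
      have h4 : Fintype.card V = 4 := by
        rw [← Fintype.card_fin 4]; exact Fintype.card_congr φ.toEquiv
      omega
  · -- card V = 4
    obtain ⟨e, g, hs, hi, hval0, hval1, hadj⟩ := reduceToFin G h
    constructor
    · rintro ⟨h3, hcrit⟩
      have hcond : gval g 4 true ∅ = 3 ∧ ∀ w, gval g 4 true {w} < 3 := by
        refine ⟨hval0 ▸ h3, fun w => ?_⟩
        have h2 := hcrit (e.symm w)
        rw [h3, hval1 (e.symm w)] at h2
        simpa using h2
      obtain ⟨p, hp⟩ := (key4 (g 0 1) (g 0 2) (g 0 3) (g 1 2) (g 1 3) (g 2 3)).mp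
        (by rw [← eqTbl4 hs hi]; exact hcond)
      have hp' : ∀ i j, g i j = pAdjB (p i) (p j) := by
        rw [eqTbl4 hs hi]; exact hp
      refine ⟨⟨e.trans (p : Fin 4 ≃ Fin 4), ?_⟩⟩
      intro a b
      simp only [Equiv.trans_apply]
      rw [← pAdjB_iff, ← hp' (e a) (e b)]
      exact (hadj a b).symm
    · rintro ⟨φ⟩
      set p : Equiv.Perm (Fin 4) := e.symm.trans φ.toEquiv with hpdef
      have hp : ∀ i j, g i j = pAdjB (p i) (p j) := by
        intro i j
        have hiff : g i j = true ↔ pAdjB (p i) (p j) = true := by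
          rw [pAdjB_iff]
          have h1 := φ.map_rel_iff (a := e.symm i) (b := e.symm j)
          have h2 := hadj (e.symm i) (e.symm j)
          simp only [Equiv.apply_symm_apply] at h2
          rw [← h2]
          rw [hpdef]
          simp only [Equiv.trans_apply]
          exact h1.symm
        calc g i j = decide (g i j = true) := (Bool.decide_coe _).symm
          _ = decide (pAdjB (p i) (p j) = true) := decide_eq_decide.mpr hiff
          _ = pAdjB (p i) (p j) := Bool.decide_coe _
      have hcond := (key4 (g 0 1) (g 0 2) (g 0 3) (g 1 2) (g 1 3) (g 2 3)).mpr
        ⟨p, by rw [← eqTbl4 hs hi]; exact hp⟩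
      rw [← eqTbl4 hs hi] at hcond
      refine ⟨by rw [hval0]; exact hcond.1, fun v => ?_⟩
      rw [hval1 v, hval0, hcond.1]
      exact hcond.2 (e v)
end
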